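/- Let M be a subspace of a real Banach space E such that M^# = {f ∈ E* : ‖f‖ = ‖f|_M‖} is a linear subspace of E*. Then M has property-SNP with respect to the generating family ℱ of the weak topology on E. -/

import Mathlib

/-!
Extend `f` by Hahn–Banach to `f̃` with `‖f̃‖ = ‖f‖` and take `F₀ = {f̃ / ‖f̃‖}`. For every `F` in
the dual unit ball with `ρ_{F₀} ≤ ρ_F` we get `|f̃| ≤ ‖f‖ ρ_F`, while `ρ_F ≤ ‖·‖`; hence `χ_F^E(f̃)`
and `χ_F^M(f)` both equal `‖f‖`. Conversely, an extension `g` with `χ_F^E(g) = ‖f‖` satisfies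
`|g| ≤ ‖f‖ ρ_F ≤ ‖f‖ ‖·‖`, so it is norm preserving. Then `g` and `f̃` lie in `M^#`, hence so
does `g - f̃`; as it vanishes on `M`, its norm is `0`.
-/

open scoped ENNReal

noncomputable section

/-- `χ_ρ(g) = sup { |g v| : ρ v ≤ 1 } ∈ [0,∞]`. -/
def chi {V : Type*} [AddCommGroup V] [Module ℝ V] [TopologicalSpace V]
    (ρ : V → ℝ) (g : V →L[ℝ] ℝ) : ℝ≥0∞ :=
  ⨆ v ∈ {v : V | ρ v ≤ 1}, ENNReal.ofReal |g v|

/-- The seminorm `ρ_F(x) = max_{f ∈ F} |f x|` of the weak topology, for a finite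
set `F` of functionals. -/
def rhoF {E : Type*} [NormedAddCommGroup E] [NormedSpace ℝ E]
    (F : Finset (E →L[ℝ] ℝ)) (x : E) : ℝ :=
  ⨆ f ∈ F, |f x|

/-- `M` has property-SNP with respect to the generating family
`ℱ = {ρ_F : F ⊆ B_{E*} finite}` of the weak topology on `E`. -/
def SNPweak {E : Type*} [NormedAddCommGroup E] [NormedSpace ℝ E]
    (M : Submodule ℝ E) : Prop :=
  ∀ f : M →L[ℝ] ℝ, ∃ F₀ : Finset (E →L[ℝ] ℝ), (∀ φ ∈ F₀, ‖φ‖ ≤ 1) ∧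
    chi (fun y : M => rhoF F₀ (y : E)) f < ⊤ ∧ ∃ ft : E →L[ℝ] ℝ,
      ∀ F : Finset (E →L[ℝ] ℝ), (∀ φ ∈ F, ‖φ‖ ≤ 1) → (∀ x, rhoF F₀ x ≤ rhoF F x) →
        (ft.comp M.subtypeL = f ∧ chi (rhoF F) ft = chi (fun y : M => rhoF F (y : E)) f) ∧
        ∀ g : E →L[ℝ] ℝ, g.comp M.subtypeL = f →
          chi (rhoF F) g = chi (fun y : M => rhoF F (y : E)) f → g = ft

section Chi

variable {V : Type*} [AddCommGroup V] [Module ℝ V] [TopologicalSpace V] {ρ : V → ℝ}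
  {g : V →L[ℝ] ℝ}

lemma le_chi {v : V} (hv : ρ v ≤ 1) : ENNReal.ofReal |g v| ≤ chi ρ g :=
  le_iSup₂ (f := fun v (_ : v ∈ {v : V | ρ v ≤ 1}) => ENNReal.ofReal |g v|) v hv

lemma chi_comp_le {W : Type*} [AddCommGroup W] [Module ℝ W] [TopologicalSpace W]
    (T : W →L[ℝ] V) : chi (fun w => ρ (T w)) (g.comp T) ≤ chi ρ g :=
  iSup₂_le fun _ hw => le_chi hw

lemma chi_le_ofReal_iff (hρ_nonneg : ∀ v, 0 ≤ ρ v)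
    (hρ_smul : ∀ t : ℝ, 0 < t → ∀ v, ρ (t • v) = t * ρ v) {c : ℝ} (hc : 0 ≤ c) :
    chi ρ g ≤ ENNReal.ofReal c ↔ ∀ v, |g v| ≤ c * ρ v := by
  constructor
  · intro h v
    -- test `g` on `v` rescaled into the `ρ`-unit ball, then let the slack `ε` tend to `0`
    have hε : ∀ ε > 0, |g v| ≤ c * (ρ v + ε) := fun ε hε => by
      have hs : 0 < ρ v + ε := by linarith [hρ_nonneg v]
      have hball : ρ ((ρ v + ε)⁻¹ • v) ≤ 1 := by
        rw [hρ_smul _ (inv_pos.mpr hs), inv_mul_le_one₀ hs]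
        linarith
      have := (ENNReal.ofReal_le_ofReal_iff hc).mp ((le_chi hball).trans h)
      rw [map_smul, smul_eq_mul, abs_mul, abs_of_pos (inv_pos.mpr hs), inv_mul_le_iff₀ hs] at this
      linarith
    have hlim : Filter.Tendsto (fun ε => c * (ρ v + ε)) (nhdsWithin 0 (Set.Ioi 0))
        (nhds (c * ρ v)) := by
      refine tendsto_nhdsWithin_of_tendsto_nhds ?_
      simpa using ((continuous_const.add continuous_id).const_mul c).tendsto (0 : ℝ)
    exact ge_of_tendsto hlim (eventually_nhdsWithin_of_forall hε)
  · intro h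
    refine iSup₂_le fun v hv => ENNReal.ofReal_le_ofReal ?_
    calc |g v| ≤ c * ρ v := h v
      _ ≤ c := mul_le_of_le_one_right hc hv

end Chi

section NormedChi

variable {V : Type*} [SeminormedAddCommGroup V] [NormedSpace ℝ V] {ρ : V → ℝ}
  {g : V →L[ℝ] ℝ}

lemma opNorm_le_of_chi_le (hρ_nonneg : ∀ v, 0 ≤ ρ v)
    (hρ_smul : ∀ t : ℝ, 0 < t → ∀ v, ρ (t • v) = t * ρ v) (hρ_le : ∀ v, ρ v ≤ ‖v‖)
    {c : ℝ} (hc : 0 ≤ c) (h : chi ρ g ≤ ENNReal.ofReal c) : ‖g‖ ≤ c :=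
  g.opNorm_le_bound hc fun v =>
    ((chi_le_ofReal_iff hρ_nonneg hρ_smul hc).mp h v).trans (by gcongr; exact hρ_le v)

lemma ofReal_opNorm_le_chi (hρ_nonneg : ∀ v, 0 ≤ ρ v)
    (hρ_smul : ∀ t : ℝ, 0 < t → ∀ v, ρ (t • v) = t * ρ v) (hρ_le : ∀ v, ρ v ≤ ‖v‖) :
    ENNReal.ofReal ‖g‖ ≤ chi ρ g := by
  rcases eq_or_ne (chi ρ g) ⊤ with htop | htop
  · exact htop ▸ le_top
  · rw [← ENNReal.ofReal_toReal htop]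
    exact ENNReal.ofReal_le_ofReal <| opNorm_le_of_chi_le hρ_nonneg hρ_smul hρ_le
      ENNReal.toReal_nonneg (ENNReal.ofReal_toReal htop).ge

end NormedChi

section RhoF

variable {E : Type*} [NormedAddCommGroup E] [NormedSpace ℝ E]

lemma rhoF_nonneg (F : Finset (E →L[ℝ] ℝ)) (x : E) : 0 ≤ rhoF F x :=
  Real.iSup_nonneg fun _ => Real.iSup_nonneg fun _ => abs_nonneg _

lemma rhoF_smul (F : Finset (E →L[ℝ] ℝ)) (t : ℝ) (x : E) :
    rhoF F (t • x) = |t| * rhoF F x := by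
  simp only [rhoF, map_smul, smul_eq_mul, abs_mul, Real.mul_iSup_of_nonneg (abs_nonneg t)]

lemma rhoF_smul_of_pos (F : Finset (E →L[ℝ] ℝ)) (t : ℝ) (ht : 0 < t) (x : E) :
    rhoF F (t • x) = t * rhoF F x := by
  rw [rhoF_smul, abs_of_pos ht]

lemma rhoF_le_norm {F : Finset (E →L[ℝ] ℝ)} (hF : ∀ φ ∈ F, ‖φ‖ ≤ 1) (x : E) :
    rhoF F x ≤ ‖x‖ :=
  Real.iSup_le (fun φ => Real.iSup_le (fun hφ => (φ.le_opNorm x).trans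
    (mul_le_of_le_one_left (norm_nonneg x) (hF φ hφ))) (norm_nonneg x)) (norm_nonneg x)

lemma abs_apply_le_rhoF {F : Finset (E →L[ℝ] ℝ)} {φ : E →L[ℝ] ℝ} (hφ : φ ∈ F) (x : E) :
    |φ x| ≤ rhoF F x := by
  have hbdd : BddAbove (Set.range fun ψ : E →L[ℝ] ℝ => ⨆ _ : ψ ∈ F, |ψ x|) :=
    ⟨∑ ψ ∈ F, |ψ x|, Set.forall_mem_range.mpr fun ψ => Real.iSup_le
      (fun hψ => F.single_le_sum (fun ψ _ => abs_nonneg (ψ x)) hψ)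
      (F.sum_nonneg fun ψ _ => abs_nonneg (ψ x))⟩
  exact (le_ciSup (f := fun _ : φ ∈ F => |φ x|) (Set.finite_range _).bddAbove hφ).trans
    (le_ciSup hbdd φ)

lemma abs_apply_le_opNorm_mul_rhoF (g : E →L[ℝ] ℝ) {F : Finset (E →L[ℝ] ℝ)}
    (hF : ∀ x, rhoF {‖g‖⁻¹ • g} x ≤ rhoF F x) (x : E) : |g x| ≤ ‖g‖ * rhoF F x := by
  rcases eq_or_ne g 0 with rfl | hg
  · simp
  calc |g x| = ‖g‖ * |(‖g‖⁻¹ • g) x| := by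
        rw [smul_apply, smul_eq_mul, abs_mul, abs_inv, abs_norm,
          mul_inv_cancel_left₀ (norm_ne_zero_iff.mpr hg)]
    _ ≤ ‖g‖ * rhoF F x := by
        gcongr
        exact (abs_apply_le_rhoF (Finset.mem_singleton_self _) x).trans (hF x)

end RhoF

lemma norm_comp_subtypeL_le {𝕜 E G : Type*} [NontriviallyNormedField 𝕜]
    [SeminormedAddCommGroup E] [NormedSpace 𝕜 E] [SeminormedAddCommGroup G] [NormedSpace 𝕜 G]
    (g : E →L[𝕜] G) (M : Submodule 𝕜 E) : ‖g.comp M.subtypeL‖ ≤ ‖g‖ :=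
  (g.opNorm_comp_le M.subtypeL).trans
    (mul_le_of_le_one_right (norm_nonneg g) (Submodule.norm_subtypeL_le M))

lemma eq_of_comp_subtypeL_eq_of_norm_eq {𝕜 E G : Type*} [NontriviallyNormedField 𝕜]
    [NormedAddCommGroup E] [NormedSpace 𝕜 E] [NormedAddCommGroup G] [NormedSpace 𝕜 G]
    {M : Submodule 𝕜 E} {S : Submodule 𝕜 (E →L[𝕜] G)}
    (hS : (S : Set (E →L[𝕜] G)) = {f | ‖f‖ = ‖f.comp M.subtypeL‖}) {g h : E →L[𝕜] G}
    (hg : ‖g‖ = ‖g.comp M.subtypeL‖) (hh : ‖h‖ = ‖h.comp M.subtypeL‖)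
    (hgh : g.comp M.subtypeL = h.comp M.subtypeL) : g = h := by
  have hmem : ∀ f, f ∈ S ↔ ‖f‖ = ‖f.comp M.subtypeL‖ := fun f => by
    rw [← SetLike.mem_coe, hS, Set.mem_ofPred_eq]
  have hsub := (hmem (g - h)).mp (S.sub_mem ((hmem g).mpr hg) ((hmem h).mpr hh))
  rwa [ContinuousLinearMap.sub_comp, hgh, sub_self, norm_zero, norm_eq_zero, sub_eq_zero]
    at hsub

theorem statement14_general {E : Type*} [NormedAddCommGroup E] [NormedSpace ℝ E]
    (M : Submodule ℝ E)
    (hlin : ∃ S : Submodule ℝ (E →L[ℝ] ℝ),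
      (S : Set (E →L[ℝ] ℝ)) = {f : E →L[ℝ] ℝ | ‖f‖ = ‖f.comp M.subtypeL‖}) :
    SNPweak M := by
  obtain ⟨S, hS⟩ := hlin
  intro f
  obtain ⟨ft, hft, hnorm⟩ := exists_extension_norm_eq M f
  have hcomp : ft.comp M.subtypeL = f := ContinuousLinearMap.ext hft
  have hbound : ∀ F : Finset (E →L[ℝ] ℝ), (∀ x, rhoF {‖ft‖⁻¹ • ft} x ≤ rhoF F x) →
      chi (rhoF F) ft ≤ ENNReal.ofReal ‖f‖ := fun F hF =>
    (chi_le_ofReal_iff (rhoF_nonneg F) (rhoF_smul_of_pos F) (norm_nonneg f)).mpr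
      fun x => hnorm ▸ abs_apply_le_opNorm_mul_rhoF ft hF x
  refine ⟨{‖ft‖⁻¹ • ft}, ?_, ?_, ft, fun F hF hF₀ => ?_⟩
  · simpa using mem_closedBall_zero_iff.mp (inv_norm_smul_mem_unitClosedBall ft)
  · rw [← hcomp]
    exact ((chi_comp_le M.subtypeL).trans (hbound _ fun _ => le_rfl)).trans_lt
      ENNReal.ofReal_lt_top
  have hM : ENNReal.ofReal ‖f‖ ≤ chi (fun y : M => rhoF F (y : E)) f :=
    ofReal_opNorm_le_chi (fun y => rhoF_nonneg F y)
      (fun t ht y => by rw [Submodule.coe_smul, rhoF_smul_of_pos F t ht])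
      (fun y => rhoF_le_norm hF y)
  have hres : chi (fun y : M => rhoF F (y : E)) f ≤ chi (rhoF F) ft :=
    hcomp ▸ chi_comp_le M.subtypeL
  have hchi : chi (rhoF F) ft = chi (fun y : M => rhoF F (y : E)) f :=
    le_antisymm ((hbound F hF₀).trans hM) hres
  refine ⟨⟨hcomp, hchi⟩, fun g hg hg_chi => ?_⟩
  have hg_le : ‖g‖ ≤ ‖f‖ :=
    opNorm_le_of_chi_le (rhoF_nonneg F) (rhoF_smul_of_pos F) (rhoF_le_norm hF) (norm_nonneg f)
      (hg_chi.trans_le (hres.trans (hbound F hF₀)))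
  refine eq_of_comp_subtypeL_eq_of_norm_eq hS ?_ (by rw [hcomp, hnorm]) (hg.trans hcomp.symm)
  exact le_antisymm (by rwa [hg]) (norm_comp_subtypeL_le g M)

theorem statement14 {E : Type*} [NormedAddCommGroup E] [NormedSpace ℝ E] [CompleteSpace E]
    (M : Submodule ℝ E)
    (hlin : ∃ S : Submodule ℝ (E →L[ℝ] ℝ),
      (S : Set (E →L[ℝ] ℝ)) = {f : E →L[ℝ] ℝ | ‖f‖ = ‖f.comp M.subtypeL‖}) :
    SNPweak M :=
  statement14_general M hlin
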